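/- Let K ⊂ E be a compact product with equilibrium state μ, and let φ be a Hausdorff function. If the lower φ-density D_ = liminf_{ε→0} μ(B(x,ε))/φ(ε) (constant over x ∈ K) satisfies 0 < D_ < ∞, then the φ-packing premeasure P_0^φ(K) = lim_{ε→0} sup{Σ φ(|B_i|) : (B_i) disjoint open balls of radius ≤ ε in K} equals 1/D_. -/

import Mathlib

open scoped Classical ENNReal
open Filter Topology MeasureTheory

/-- The minimal index (counting from 1) at which two elements of the compact product
`K = ∏_k {1,…,n k}` differ. -/
noncomputable def chiK {n : ℕ → ℕ} (x y : ∀ k, Fin (n k)) : ℕ := sInf {k | x k ≠ y k} + 1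

/-- The ultrametric `δ(x,y) = 2^{-χ(x,y)}` on the compact product. -/
noncomputable def deltaK {n : ℕ → ℕ} (x y : ∀ k, Fin (n k)) : ℝ :=
  if x = y then 0 else (2 : ℝ) ^ (-(chiK x y : ℤ))

/-- The open `δ`-ball of center `x` and radius `ε`. -/
def BallK {n : ℕ → ℕ} (x : ∀ k, Fin (n k)) (ε : ℝ) : Set (∀ k, Fin (n k)) :=
  {y | deltaK x y < ε}

/-- The equilibrium state: the product of the uniform probability measures, characterized
by its values on cylinders. -/
def IsEquilibrium {n : ℕ → ℕ} (μ : Measure (∀ k, Fin (n k))) : Prop :=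
  ∀ (k : ℕ) (s : ∀ j, Fin (n j)),
    μ {y | ∀ j < k, y j = s j} = ∏ j ∈ Finset.range k, ((n j : ℝ≥0∞))⁻¹

/-- Hausdorff functions: continuous nondecreasing, vanishing exactly at `0`. -/
def IsHausdorffFn (φ : ℝ → ℝ) : Prop :=
  ContinuousOn φ (Set.Ici 0) ∧ MonotoneOn φ (Set.Ici 0) ∧ φ 0 = 0 ∧ ∀ ε > 0, 0 < φ ε

/-- The upper `φ`-density of `μ` at `x`. -/
noncomputable def upperDensK {n : ℕ → ℕ} (μ : Measure (∀ k, Fin (n k))) (φ : ℝ → ℝ)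
    (x : ∀ k, Fin (n k)) : ℝ≥0∞ :=
  Filter.limsup (fun ε : ℝ => μ (BallK x ε) / ENNReal.ofReal (φ ε)) (𝓝[>] 0)

/-- The lower `φ`-density of `μ` at `x`. -/
noncomputable def lowerDensK {n : ℕ → ℕ} (μ : Measure (∀ k, Fin (n k))) (φ : ℝ → ℝ)
    (x : ∀ k, Fin (n k)) : ℝ≥0∞ :=
  Filter.liminf (fun ε : ℝ => μ (BallK x ε) / ENNReal.ofReal (φ ε)) (𝓝[>] 0)

/-- The `φ`-Hausdorff measure on the compact product, defined via countable covers by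
open balls of radii at most `ε`, letting `ε → 0`. -/
noncomputable def HK {n : ℕ → ℕ} (φ : ℝ → ℝ) (S : Set (∀ k, Fin (n k))) : ℝ≥0∞ :=
  ⨆ (ε : ℝ) (_ : 0 < ε),
    ⨅ (c : ℕ → (∀ k, Fin (n k)) × ℝ)
      (_ : (∀ i, 0 ≤ (c i).2 ∧ (c i).2 ≤ ε) ∧ S ⊆ ⋃ i, BallK (c i).1 (c i).2),
      ∑' i, ENNReal.ofReal (φ (c i).2)

/-- The `φ`-packing premeasure on the compact product, defined via countable packs by
disjoint open balls centered in the set, of radii at most `ε`, letting `ε → 0`. -/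
noncomputable def PK0 {n : ℕ → ℕ} (φ : ℝ → ℝ) (S : Set (∀ k, Fin (n k))) : ℝ≥0∞ :=
  ⨅ (ε : ℝ) (_ : 0 < ε),
    ⨆ (c : ℕ → (∀ k, Fin (n k)) × ℝ)
      (_ : (∀ i, (c i).1 ∈ S ∧ 0 ≤ (c i).2 ∧ (c i).2 ≤ ε) ∧
        Pairwise fun i j => Disjoint (BallK (c i).1 (c i).2) (BallK (c j).1 (c j).2)),
      ∑' i, ENNReal.ofReal (φ (c i).2)

/-- The `φ`-packing measure on the compact product. -/
noncomputable def PK {n : ℕ → ℕ} (φ : ℝ → ℝ) (S : Set (∀ k, Fin (n k))) : ℝ≥0∞ :=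
  ⨅ (F : ℕ → Set (∀ k, Fin (n k))) (_ : S ⊆ ⋃ m, F m), ∑' m, PK0 φ (F m)

/-!
All balls of radius `r` are cylinders of one level, so they have the same measure `ν r` and
those of one radius partition `K`. If `t < D`, then `t φ(r) ≤ ν r` for all small `r`, and any
packing by small balls has `t ∑ φ(rᵢ) ≤ ∑ μ(Bᵢ) ≤ 1`. If `t > D`, there are arbitrarily
small `r` with `ν r < t φ(r)`, and the partition of `K` into balls of radius `r` is a packing
with `1 = ∑ μ(Bᵢ) ≤ t ∑ φ(rᵢ)`.
-/

open Set

section Geometry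

variable {n : ℕ → ℕ}

def cylK (x : ∀ k, Fin (n k)) (m : ℕ) : Set (∀ k, Fin (n k)) :=
  {y | ∀ j < m, y j = x j}

lemma cylK_zero (x : ∀ k, Fin (n k)) : cylK x 0 = univ := by
  simp [cylK]

lemma measurableSet_cylK (x : ∀ k, Fin (n k)) (m : ℕ) : MeasurableSet (cylK x m) := by
  simp only [cylK, ofPred_forall]
  exact .iInter fun j => .iInter fun _ =>
    (measurableSet_singleton (x j)).preimage (measurable_pi_apply j)

lemma disjoint_cylK {x y : ∀ k, Fin (n k)} {m j : ℕ} (hj : j < m) (h : x j ≠ y j) :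
    Disjoint (cylK x m) (cylK y m) :=
  disjoint_left.2 fun _ hzx hzy => h ((hzx j hj).symm.trans (hzy j hj))

lemma deltaK_nonneg (x y : ∀ k, Fin (n k)) : 0 ≤ deltaK x y := by
  unfold deltaK
  split <;> positivity

lemma ballK_eq_empty (x : ∀ k, Fin (n k)) {ε : ℝ} (hε : ε ≤ 0) : BallK x ε = ∅ :=
  eq_empty_of_forall_notMem fun y hy => (hε.trans (deltaK_nonneg x y)).not_gt hy

lemma ballK_mono (x : ∀ k, Fin (n k)) {ε ε' : ℝ} (h : ε ≤ ε') : BallK x ε ⊆ BallK x ε' :=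
  fun _ hy => lt_of_lt_of_le hy h

lemma le_sInf_ne_iff {x y : ∀ k, Fin (n k)} (hxy : x ≠ y) (m : ℕ) :
    m ≤ sInf {k | x k ≠ y k} ↔ ∀ j < m, y j = x j := by
  constructor
  · intro hm j hj
    by_contra hne
    exact (Nat.sInf_le (Ne.symm hne : x j ≠ y j)).not_gt (hj.trans_le hm)
  · intro h
    by_contra! hlt
    exact Nat.sInf_mem (Function.ne_iff.mp hxy) (h _ hlt).symm

lemma ballK_eq_cylK (x : ∀ k, Fin (n k)) {ε : ℝ} {m : ℕ}
    (h1 : (2⁻¹ : ℝ) ^ (m + 1) < ε) (h2 : ε ≤ (2⁻¹ : ℝ) ^ m) : BallK x ε = cylK x m := by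
  ext y
  by_cases hxy : x = y
  · subst hxy
    simpa [BallK, cylK, deltaK] using (pow_pos (by norm_num) _).trans h1
  have hδ : deltaK x y = (2⁻¹ : ℝ) ^ (sInf {k | x k ≠ y k} + 1) := by
    rw [deltaK, if_neg hxy, chiK, zpow_neg, zpow_natCast, inv_pow]
  simp only [BallK, cylK, mem_ofPred_eq, hδ, ← le_sInf_ne_iff hxy]
  constructor
  · intro hlt
    by_contra! hsm
    exact (h2.trans (pow_le_pow_of_le_one (by norm_num) (by norm_num) hsm)).not_gt hlt
  · intro hms
    exact (pow_le_pow_of_le_one (by norm_num) (by norm_num) (by omega)).trans_lt h1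

lemma exists_ballK_eq_cylK {ε : ℝ} (hε : 0 < ε) :
    ∃ m, ∀ x : ∀ k, Fin (n k), BallK x ε = cylK x m := by
  rcases le_or_gt ε 1 with h | h
  · obtain ⟨m, h1, h2⟩ := exists_nat_pow_near_of_lt_one hε h (by norm_num : (0 : ℝ) < 2⁻¹)
      (by norm_num)
    exact ⟨m, fun x => ballK_eq_cylK x h1 h2⟩
  · refine ⟨0, fun x => ?_⟩
    rw [cylK_zero]
    refine eq_univ_of_univ_subset ?_
    rw [← cylK_zero x, ← ballK_eq_cylK x (ε := 1) (m := 0) (by norm_num) (by norm_num)]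
    exact ballK_mono x h.le

lemma measurableSet_ballK (x : ∀ k, Fin (n k)) (ε : ℝ) : MeasurableSet (BallK x ε) := by
  rcases le_or_gt ε 0 with hε | hε
  · rw [ballK_eq_empty x hε]
    exact .empty
  · obtain ⟨m, hm⟩ := exists_ballK_eq_cylK (n := n) hε
    rw [hm]
    exact measurableSet_cylK x m

end Geometry

section Packing

variable {n : ℕ → ℕ}

/-- Radii may vanish, so finite packings fit in after padding with empty balls. -/
def IsPackingK (S : Set (∀ k, Fin (n k))) (ε : ℝ) (c : ℕ → (∀ k, Fin (n k)) × ℝ) : Prop :=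
  (∀ i, (c i).1 ∈ S ∧ 0 ≤ (c i).2 ∧ (c i).2 ≤ ε) ∧
    Pairwise fun i j => Disjoint (BallK (c i).1 (c i).2) (BallK (c j).1 (c j).2)

lemma PK0_eq (φ : ℝ → ℝ) (S : Set (∀ k, Fin (n k))) :
    PK0 φ S = ⨅ (ε : ℝ) (_ : 0 < ε), ⨆ (c) (_ : IsPackingK S ε c),
      ∑' i, ENNReal.ofReal (φ (c i).2) :=
  rfl

lemma IsPackingK.mono {S : Set (∀ k, Fin (n k))} {ε ε' : ℝ} {c : ℕ → (∀ k, Fin (n k)) × ℝ}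
    (hc : IsPackingK S ε c) (h : ε ≤ ε') : IsPackingK S ε' c :=
  ⟨fun i => ⟨(hc.1 i).1, (hc.1 i).2.1, (hc.1 i).2.2.trans h⟩, hc.2⟩

lemma exists_isPackingK_of_countable {ι : Type*} [Countable ι] (x : ∀ k, Fin (n k))
    (b : ι → ∀ k, Fin (n k)) {r : ℝ} (hr : 0 ≤ r)
    (hb : Pairwise fun a a' => Disjoint (BallK (b a) r) (BallK (b a') r)) :
    ∃ c, IsPackingK (univ : Set (∀ k, Fin (n k))) r c ∧ (∀ i, (c i).2 = 0 ∨ (c i).2 = r) ∧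
      ⋃ i, BallK (c i).1 (c i).2 = ⋃ a, BallK (b a) r := by
  obtain ⟨e, he⟩ := exists_injective_nat ι
  set c := Function.extend e (fun a => (b a, r)) (fun _ => (x, (0 : ℝ)))
  have hc : ∀ i, (∃ a, e a = i ∧ c i = (b a, r)) ∨ c i = (x, 0) := by
    intro i
    by_cases hi : ∃ a, e a = i
    · obtain ⟨a, rfl⟩ := hi
      exact .inl ⟨a, rfl, he.extend_apply _ _ a⟩
    · exact .inr (Function.extend_apply' _ _ i hi)
  have hempty : BallK x 0 = ∅ := ballK_eq_empty x le_rfl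
  refine ⟨c, ⟨fun i => ⟨trivial, ?_⟩, fun i j hij => ?_⟩, fun i => ?_, ?_⟩
  · rcases hc i with ⟨a, -, hca⟩ | hcx <;> simp [*]
  · rcases hc i with ⟨a, rfl, hca⟩ | hcx
    · rcases hc j with ⟨a', rfl, hca'⟩ | hcx'
      · rw [hca, hca']
        exact hb fun haa' => hij (congrArg e haa')
      · simp [hcx', hempty]
    · simp [hcx, hempty]
  · rcases hc i with ⟨a, -, hca⟩ | hcx <;> simp [*]
  · apply Subset.antisymm
    · refine iUnion_subset fun i => ?_
      rcases hc i with ⟨a, -, hca⟩ | hcx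
      · rw [hca]
        exact subset_iUnion (fun a => BallK (b a) r) a
      · simp [hcx, hempty]
    · refine iUnion_subset fun a => ?_
      have hca : c (e a) = (b a, r) := he.extend_apply _ _ a
      exact (congrArg (fun p => BallK p.1 p.2) hca).symm.subset.trans
        (subset_iUnion (fun i => BallK (c i).1 (c i).2) (e a))

/-- The balls of radius `r` are the cylinders of one level `m`, indexed by the words of
length `m`. -/
lemma exists_isPackingK_cover (x : ∀ k, Fin (n k)) {r : ℝ} (hr : 0 < r) :
    ∃ c, IsPackingK (univ : Set (∀ k, Fin (n k))) r c ∧ (∀ i, (c i).2 = 0 ∨ (c i).2 = r) ∧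
      ⋃ i, BallK (c i).1 (c i).2 = univ := by
  obtain ⟨m, hm⟩ := exists_ballK_eq_cylK (n := n) hr
  let ext : (∀ j : Fin m, Fin (n j)) → ∀ k, Fin (n k) :=
    fun a k => if h : k < m then a ⟨k, h⟩ else x k
  have hdisj : Pairwise fun a a' => Disjoint (BallK (ext a) r) (BallK (ext a') r) := by
    intro a a' haa'
    obtain ⟨j, hj⟩ := Function.ne_iff.mp haa'
    rw [hm, hm]
    exact disjoint_cylK j.2 (by simpa [ext] using hj)
  obtain ⟨c, hc, hrad, hunion⟩ := exists_isPackingK_of_countable x ext hr.le hdisj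
  refine ⟨c, hc, hrad, hunion.trans (eq_univ_of_forall fun y => mem_iUnion.2 ⟨fun j => y j, ?_⟩)⟩
  rw [hm]
  intro j hj
  simp [ext, hj]

end Packing

section Measure

variable {n : ℕ → ℕ} {μ : Measure (∀ k, Fin (n k))}

lemma IsEquilibrium.measure_univ (hμ : IsEquilibrium μ) (x : ∀ k, Fin (n k)) : μ univ = 1 := by
  simpa [cylK_zero] using (hμ 0 x : μ (cylK x 0) = _)

lemma IsEquilibrium.measure_ballK_eq (hμ : IsEquilibrium μ) (x y : ∀ k, Fin (n k)) (ε : ℝ) :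
    μ (BallK x ε) = μ (BallK y ε) := by
  rcases le_or_gt ε 0 with hε | hε
  · rw [ballK_eq_empty x hε, ballK_eq_empty y hε]
  · obtain ⟨m, hm⟩ := exists_ballK_eq_cylK (n := n) hε
    rw [hm, hm]
    exact (hμ m x).trans (hμ m y).symm

lemma tsum_measure_ballK {c : ℕ → (∀ k, Fin (n k)) × ℝ}
    (hc : Pairwise fun i j => Disjoint (BallK (c i).1 (c i).2) (BallK (c j).1 (c j).2)) :
    ∑' i, μ (BallK (c i).1 (c i).2) = μ (⋃ i, BallK (c i).1 (c i).2) :=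
  (measure_iUnion hc fun _ => measurableSet_ballK _ _).symm

end Measure

section Density

variable {n : ℕ → ℕ} {μ : Measure (∀ k, Fin (n k))} {φ : ℝ → ℝ}

lemma IsHausdorffFn.ofReal_ne_zero (hφ : IsHausdorffFn φ) {r : ℝ} (hr : 0 < r) :
    ENNReal.ofReal (φ r) ≠ 0 :=
  ENNReal.ofReal_ne_zero_iff.2 (hφ.2.2.2 r hr)

lemma PK0_le_inv_lowerDensK (hμ : IsEquilibrium μ) (hφ : IsHausdorffFn φ)
    (S : Set (∀ k, Fin (n k))) (x : ∀ k, Fin (n k)) :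
    PK0 φ S ≤ (lowerDensK μ φ x)⁻¹ := by
  rw [ENNReal.le_inv_iff_le_inv]
  refine le_of_forall_lt_imp_le_of_dense fun t ht => ?_
  obtain ⟨ε, hε, hlt⟩ := mem_nhdsGT_iff_exists_Ioo_subset.mp (eventually_lt_of_lt_liminf ht)
  rw [mem_Ioi] at hε
  rw [← ENNReal.le_inv_iff_le_inv, PK0_eq]
  refine iInf₂_le_of_le (ε / 2) (half_pos hε) (iSup₂_le fun c hc => ?_)
  have hbound : ∀ i, t * ENNReal.ofReal (φ (c i).2) ≤ μ (BallK (c i).1 (c i).2) := by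
    intro i
    rcases (hc.1 i).2.1.eq_or_lt with h0 | hpos
    · simp [← h0, hφ.2.2.1]
    have hr : (c i).2 ∈ Ioo 0 ε := ⟨hpos, (hc.1 i).2.2.trans_lt (by linarith)⟩
    rw [hμ.measure_ballK_eq _ x]
    exact ((ENNReal.lt_div_iff_mul_lt (.inl (hφ.ofReal_ne_zero hpos))
      (.inl ENNReal.ofReal_ne_top)).mp (hlt hr)).le
  rw [ENNReal.le_inv_iff_mul_le, mul_comm]
  calc t * ∑' i, ENNReal.ofReal (φ (c i).2)
      = ∑' i, t * ENNReal.ofReal (φ (c i).2) := ENNReal.tsum_mul_left.symm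
    _ ≤ ∑' i, μ (BallK (c i).1 (c i).2) := ENNReal.tsum_le_tsum hbound
    _ = μ (⋃ i, BallK (c i).1 (c i).2) := tsum_measure_ballK hc.2
    _ ≤ 1 := (measure_mono (subset_univ _)).trans (hμ.measure_univ x).le

lemma inv_lowerDensK_le_PK0_univ (hμ : IsEquilibrium μ) (hφ : IsHausdorffFn φ)
    (x : ∀ k, Fin (n k)) :
    (lowerDensK μ φ x)⁻¹ ≤ PK0 φ (univ : Set (∀ k, Fin (n k))) := by
  rw [ENNReal.inv_le_iff_inv_le]
  refine le_of_forall_gt_imp_ge_of_dense fun t ht => ?_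
  rw [ENNReal.inv_le_iff_inv_le, PK0_eq]
  refine le_iInf₂ fun ε hε => ?_
  obtain ⟨r, hfr, hr⟩ :=
    ((frequently_lt_of_liminf_lt (h := ht)).and_eventually (Ioo_mem_nhdsGT hε)).exists
  obtain ⟨c, hc, hrad, hcover⟩ := exists_isPackingK_cover x hr.1
  refine le_iSup₂_of_le c (hc.mono hr.2.le) ?_
  have hbound : ∀ i, μ (BallK (c i).1 (c i).2) ≤ t * ENNReal.ofReal (φ (c i).2) := by
    intro i
    rcases hrad i with h0 | hri
    · simp [h0, ballK_eq_empty]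
    rw [hri, hμ.measure_ballK_eq _ x]
    exact ((ENNReal.div_lt_iff (.inl (hφ.ofReal_ne_zero hr.1))
      (.inl ENNReal.ofReal_ne_top)).mp hfr).le
  have hone : 1 ≤ t * ∑' i, ENNReal.ofReal (φ (c i).2) :=
    calc 1 = μ (⋃ i, BallK (c i).1 (c i).2) := by rw [hcover, hμ.measure_univ x]
      _ = ∑' i, μ (BallK (c i).1 (c i).2) := (tsum_measure_ballK hc.2).symm
      _ ≤ ∑' i, t * ENNReal.ofReal (φ (c i).2) := ENNReal.tsum_le_tsum hbound
      _ = t * ∑' i, ENNReal.ofReal (φ (c i).2) := ENNReal.tsum_mul_left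
  have hne : t * ∑' i, ENNReal.ofReal (φ (c i).2) ≠ 0 := (zero_lt_one.trans_le hone).ne'
  exact (ENNReal.inv_le_iff_le_mul (fun _ => left_ne_zero_of_mul hne)
    (fun _ => right_ne_zero_of_mul hne)).2 hone

end Density

theorem stmt12_general (n : ℕ → ℕ) (hn : ∀ k, 0 < n k) (μ : Measure (∀ k, Fin (n k)))
    (hμ : IsEquilibrium μ) (φ : ℝ → ℝ) (hφ : IsHausdorffFn φ)
    (D : ℝ≥0∞) (hD : ∀ x, lowerDensK μ φ x = D) :
    PK0 φ (Set.univ : Set (∀ k, Fin (n k))) = D⁻¹ := by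
  let x₀ : ∀ k, Fin (n k) := fun k => ⟨0, hn k⟩
  rw [← hD x₀]
  exact le_antisymm (PK0_le_inv_lowerDensK hμ hφ univ x₀) (inv_lowerDensK_le_PK0_univ hμ hφ x₀)

/-- If the lower `φ`-density of the equilibrium state (constant over the compact product)
is positive and finite, then the `φ`-packing premeasure of the whole product is its
reciprocal. -/
theorem stmt12 (n : ℕ → ℕ) (hn : ∀ k, 0 < n k) (μ : Measure (∀ k, Fin (n k)))
    (hμ : IsEquilibrium μ) (φ : ℝ → ℝ) (hφ : IsHausdorffFn φ)
    (D : ℝ≥0∞) (hD : ∀ x, lowerDensK μ φ x = D) (hD0 : 0 < D) (hDtop : D < ⊤) :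
    PK0 φ (Set.univ : Set (∀ k, Fin (n k))) = D⁻¹ :=
  stmt12_general n hn μ hμ φ hφ D hD
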